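/- Let A ⊆ ℕⁿ be a trellis (its elements being the vertices of a simplex) and let k ≥ n be a positive integer. Then the trellis kA := {k·a : a ∈ A} is an H-trellis; that is, the maximal kA-mediated set (kA)* equals Conv(kA) ∩ ℕⁿ. Equivalently, Conv(kA) ∩ ℕⁿ is itself a kA-mediated set. -/

import Mathlib

open MvPolynomial Finset Classical

namespace SONC

noncomputable section

/-- Embedding of lattice exponent vectors into `ℝⁿ`. -/
def toR {n : ℕ} (a : Fin n →₀ ℕ) : Fin n → ℝ := fun i => (a i : ℝ)

/-- A lattice point is even if all its coordinates are even, i.e. it lies in `(2ℕ)ⁿ`. -/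
def IsEvenPoint {n : ℕ} (a : Fin n →₀ ℕ) : Prop := ∀ i, Even (a i)

/-- `M` is an `A`-mediated set: `A ⊆ M` and every point of `M` is either in `A` or an
average `(u + v)/2` of two distinct even points `u, v ∈ M`. -/
def IsMediatedSet {n : ℕ} (A : Finset (Fin n →₀ ℕ)) (M : Set (Fin n →₀ ℕ)) : Prop :=
  ↑A ⊆ M ∧ ∀ p ∈ M, p ∈ A ∨
    ∃ u ∈ M, ∃ v ∈ M, u ≠ v ∧ IsEvenPoint u ∧ IsEvenPoint v ∧ ∀ i, 2 * p i = u i + v i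

/-!
Write a lattice point `p ∈ Conv(kA)` as `p = ∑ x_a a` with `x_a ≥ 0` and `∑ x_a = k`. Since
`|A| ≤ n + 1 ≤ k + 1`, the floors `⌊2 x_a⌋` sum to more than `2k - (k + 1)`, so one can pick
integers `0 ≤ z_a ≤ 2 x_a` with `∑ z_a = k`. Then `v = ∑ z_a a` and `u = 2p - v = ∑ (2 x_a - z_a) a`
are even lattice points of `Conv(kA)` with midpoint `p`. They differ as soon as `z ≠ x`, by
uniqueness of barycentric coordinates; if `x` happens to be integral, `z` is obtained from `x` by
moving one unit of weight between two vertices, which exist because `p` is not a vertex.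
-/

section Weights

variable {α : Type*}

theorem exists_le_sum_eq (s : Finset α) (m : α → ℕ) {k : ℕ} (hk : k ≤ ∑ a ∈ s, m a) :
    ∃ z : α → ℕ, (∀ a ∈ s, z a ≤ m a) ∧ ∑ a ∈ s, z a = k := by
  induction k with
  | zero => exact ⟨0, fun _ _ => Nat.zero_le _, by simp⟩
  | succ k ih =>
    obtain ⟨z, hzm, hzk⟩ := ih (Nat.le_of_succ_le hk)
    obtain ⟨b, hb, hzb⟩ : ∃ b ∈ s, z b < m b := by
      by_contra! h
      have := sum_le_sum h
      omega
    refine ⟨Function.update z b (z b + 1), fun a ha => ?_, ?_⟩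
    · rcases eq_or_ne a b with rfl | hab
      · simpa using hzb
      · simpa [hab] using hzm a ha
    · rw [sum_update_of_mem hb, sdiff_singleton_eq_erase]
      have := add_sum_erase s z hb
      omega

theorem sum_sub_card_lt_sum_floor {s : Finset α} (hs : s.Nonempty) (y : α → ℝ) :
    ∑ a ∈ s, y a - #s < ∑ a ∈ s, (⌊y a⌋₊ : ℝ) := by
  have := sum_lt_sum_of_nonempty hs fun a _ => Nat.lt_floor_add_one (y a)
  rw [sum_add_distrib, sum_const, nsmul_one] at this
  linarith

theorem exists_nat_le_two_mul_sum_eq {s : Finset α} {x : α → ℝ} {k : ℕ}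
    (hx0 : ∀ a ∈ s, 0 ≤ x a) (hxk : ∑ a ∈ s, x a = k) (hs : #s ≤ k + 1) :
    ∃ z : α → ℕ, (∀ a ∈ s, (z a : ℝ) ≤ 2 * x a) ∧ ∑ a ∈ s, z a = k := by
  obtain rfl | hne := s.eq_empty_or_nonempty
  · refine ⟨0, by simp, ?_⟩
    simp only [sum_empty] at hxk ⊢
    exact_mod_cast hxk
  have hfloor : k ≤ ∑ a ∈ s, ⌊2 * x a⌋₊ := by
    have h := sum_sub_card_lt_sum_floor hne fun a => 2 * x a
    rw [← mul_sum, hxk] at h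
    have hs' : (#s : ℝ) ≤ k + 1 := by exact_mod_cast hs
    have : (k : ℝ) < ((∑ a ∈ s, ⌊2 * x a⌋₊ : ℕ) : ℝ) + 1 := by push_cast; linarith
    exact Nat.lt_succ_iff.mp (by exact_mod_cast this)
  obtain ⟨z, hzm, hzk⟩ := exists_le_sum_eq s _ hfloor
  refine ⟨z, fun a ha => ?_, hzk⟩
  calc (z a : ℝ) ≤ ⌊2 * x a⌋₊ := by exact_mod_cast hzm a ha
    _ ≤ 2 * x a := Nat.floor_le (by linarith [hx0 a ha])

theorem exists_nat_le_two_mul_sum_eq_ne {s : Finset α} {x : α → ℝ} {k : ℕ}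
    (hx0 : ∀ a ∈ s, 0 ≤ x a) (hxk : ∑ a ∈ s, x a = k) (hs : #s ≤ k + 1)
    (hsupp : ∃ a₁ ∈ s, ∃ a₂ ∈ s, a₁ ≠ a₂ ∧ x a₁ ≠ 0 ∧ x a₂ ≠ 0) :
    ∃ z : α → ℕ, (∀ a ∈ s, (z a : ℝ) ≤ 2 * x a) ∧ ∑ a ∈ s, z a = k ∧ ∃ a ∈ s, (z a : ℝ) ≠ x a := by
  obtain ⟨z, hz2x, hzk⟩ := exists_nat_le_two_mul_sum_eq hx0 hxk hs
  by_cases hzx : ∃ a ∈ s, (z a : ℝ) ≠ x a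
  · exact ⟨z, hz2x, hzk, hzx⟩
  push Not at hzx
  -- `x = z` is integral: move one unit of weight from `a₂` to `a₁`
  obtain ⟨a₁, h₁, a₂, h₂, h12, hx₁, hx₂⟩ := hsupp
  have hz₁ : 1 ≤ z a₁ := Nat.one_le_iff_ne_zero.2 fun h => hx₁ (by rw [← hzx a₁ h₁, h]; simp)
  have hz₂ : 1 ≤ z a₂ := Nat.one_le_iff_ne_zero.2 fun h => hx₂ (by rw [← hzx a₂ h₂, h]; simp)
  set z' : α → ℕ := fun a => if a = a₁ then z a + 1 else if a = a₂ then z a - 1 else z a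
  have hshift : ∀ a, z' a + (if a = a₂ then 1 else 0) = z a + (if a = a₁ then 1 else 0) := by
    intro a
    by_cases h1 : a = a₁
    · subst h1
      simp [z', h12]
    · by_cases h2 : a = a₂
      · subst h2
        simp only [z', h1, if_false, if_true]
        omega
      · simp [z', h1, h2]
  refine ⟨z', fun a ha => ?_, ?_, a₁, h₁, ?_⟩
  · rw [← hzx a ha]
    simp only [z']
    split_ifs with ha₁ ha₂
    · subst ha₁
      have : (1 : ℝ) ≤ z a := by exact_mod_cast hz₁
      push_cast
      linarith
    · have : ((z a - 1 : ℕ) : ℝ) ≤ z a := by exact_mod_cast Nat.sub_le _ _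
      linarith [(z a).cast_nonneg (α := ℝ)]
    · linarith [(z a).cast_nonneg (α := ℝ)]
  · have := sum_congr rfl fun a (_ : a ∈ s) => hshift a
    simp only [sum_add_distrib, sum_ite_eq', h₁, h₂, if_true] at this
    omega
  · rw [← hzx a₁ h₁]
    simp [z']

end Weights

theorem exists_pair_ne_zero_of_forall_sum_smul_ne {α R E : Type*} [Semiring R] [AddCommMonoid E]
    [Module R E] {s : Finset α} {x : α → R} {f : α → E} (hx : ∑ a ∈ s, x a ≠ 0)
    (hf : ∀ b ∈ s, ∑ a ∈ s, x a • f a ≠ (∑ a ∈ s, x a) • f b) :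
    ∃ a₁ ∈ s, ∃ a₂ ∈ s, a₁ ≠ a₂ ∧ x a₁ ≠ 0 ∧ x a₂ ≠ 0 := by
  obtain ⟨b, hb, hxb⟩ := exists_ne_zero_of_sum_ne_zero hx
  by_contra! h
  have hzero : ∀ a ∈ s, a ≠ b → x a = 0 := fun a ha hab => h b hb a ha (Ne.symm hab) hxb
  apply hf b hb
  rw [sum_eq_single b (fun a ha hab => by rw [hzero a ha hab, zero_smul]) (absurd hb),
    sum_eq_single b (fun a ha hab => hzero a ha hab) (absurd hb)]

theorem mem_convexHull_smul_image_iff {α R E : Type*} [Field R] [LinearOrder R]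
    [IsStrictOrderedRing R] [AddCommGroup E] [Module R E] {s : Finset α} {f : α → E}
    (hf : Set.InjOn f s) {k : R} (hk : 0 < k) {y : E} :
    y ∈ convexHull R ((fun a => k • f a) '' s) ↔
      ∃ x : α → R, (∀ a ∈ s, 0 ≤ x a) ∧ ∑ a ∈ s, x a = k ∧ ∑ a ∈ s, x a • f a = y := by
  constructor
  · have hkf : Set.InjOn (fun a => k • f a) s :=
      fun a ha b hb h => hf ha hb (smul_right_injective E hk.ne' h)
    rw [← coe_image, mem_convexHull']
    rintro ⟨w, hw0, hw1, rfl⟩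
    refine ⟨fun a => k * w (k • f a), fun a ha => mul_nonneg hk.le (hw0 _ (mem_image_of_mem _ ha)),
      ?_, ?_⟩
    · rw [← mul_sum, ← sum_image hkf, hw1, mul_one]
    · rw [sum_image hkf]
      simp only [mul_smul, smul_comm k]
  · rintro ⟨x, hx0, hxk, rfl⟩
    have hmem := s.centerMass_mem_convexHull hx0 (hxk ▸ hk) fun a ha => Set.mem_image_of_mem
      (fun a => k • f a) ha
    have hcm : s.centerMass x (fun a => k • f a) = ∑ a ∈ s, x a • f a := by
      simp_rw [centerMass, hxk, smul_comm (x _) k, ← smul_sum, inv_smul_smul₀ hk.ne']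
    rwa [hcm] at hmem

theorem _root_.AffineIndependent.eq_of_sum_eq_sum_coe {α R V : Type*} [Ring R] [AddCommGroup V]
    [Module R V] {s : Finset α} {f : α → V} (hf : AffineIndependent R fun a : s => f a)
    {w₁ w₂ : α → R} (hw : ∑ a ∈ s, w₁ a = ∑ a ∈ s, w₂ a)
    (hwf : ∑ a ∈ s, w₁ a • f a = ∑ a ∈ s, w₂ a • f a) : ∀ a ∈ s, w₁ a = w₂ a :=
  fun a ha => hf.eq_of_sum_eq_sum (s := univ) (w₁ := fun b : s => w₁ b)
    (w₂ := fun b : s => w₂ b) (by simpa only [sum_coe_sort] using hw)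
    (by simpa only [sum_coe_sort s fun a => w₁ a • f a, sum_coe_sort s fun a => w₂ a • f a]
      using hwf) ⟨a, ha⟩ (mem_univ _)

theorem _root_.AffineIndependent.card_le_finrank_add_one {ι R V : Type*} [Fintype ι]
    [DivisionRing R] [AddCommGroup V] [Module R V] [FiniteDimensional R V] {p : ι → V}
    (hp : AffineIndependent R p) : Fintype.card ι ≤ Module.finrank R V + 1 :=
  hp.card_le_finrank_succ.trans (by gcongr; exact Submodule.finrank_le _)

section Lattice

variable {n : ℕ}

theorem toR_injective : Function.Injective (toR (n := n)) :=
  fun _ _ h => Finsupp.ext fun i => Nat.cast_injective (congrFun h i)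

theorem toR_nsmul (k : ℕ) (a : Fin n →₀ ℕ) : toR (k • a) = (k : ℝ) • toR a := by
  funext i
  simp [toR]

theorem toR_sum_nsmul {α : Type*} (s : Finset α) (z : α → ℕ) (f : α → Fin n →₀ ℕ) :
    toR (∑ a ∈ s, z a • f a) = ∑ a ∈ s, (z a : ℝ) • toR (f a) := by
  funext i
  simp [toR, Finsupp.finsetSum_apply, Finset.sum_apply]

theorem IsEvenPoint.sum_nsmul {α : Type*} {s : Finset α} {f : α → Fin n →₀ ℕ}
    (hf : ∀ a ∈ s, IsEvenPoint (f a)) (z : α → ℕ) : IsEvenPoint (∑ a ∈ s, z a • f a) := by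
  intro i
  simp only [Finsupp.finsetSum_apply, Finsupp.smul_apply, smul_eq_mul]
  exact even_sum _ fun a ha => (hf a ha i).mul_left _

theorem IsEvenPoint.of_two_mul_eq_add {p u v : Fin n →₀ ℕ} (hv : IsEvenPoint v)
    (h : ∀ i, 2 * p i = u i + v i) : IsEvenPoint u :=
  fun i => (Nat.even_add.1 (h i ▸ even_two_mul (p i))).2 (hv i)

theorem exists_even_midpoint_decomposition {k : ℕ} {A : Finset (Fin n →₀ ℕ)}
    (hA : ∀ a ∈ A, IsEvenPoint a) (hAff : AffineIndependent ℝ fun a : A => toR (a : Fin n →₀ ℕ))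
    {p : Fin n →₀ ℕ} {x : (Fin n →₀ ℕ) → ℝ} (hxk : ∑ a ∈ A, x a = k)
    (hxp : ∑ a ∈ A, x a • toR a = toR p) {z : (Fin n →₀ ℕ) → ℕ}
    (hz2x : ∀ a ∈ A, (z a : ℝ) ≤ 2 * x a) (hzk : ∑ a ∈ A, z a = k)
    (hzx : ∃ a ∈ A, (z a : ℝ) ≠ x a) :
    ∃ u v : Fin n →₀ ℕ, u ≠ v ∧ IsEvenPoint u ∧ IsEvenPoint v ∧ (∀ i, 2 * p i = u i + v i) ∧
      ∑ a ∈ A, (2 * x a - z a) • toR a = toR u ∧ ∑ a ∈ A, (z a : ℝ) • toR a = toR v := by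
  set v : Fin n →₀ ℕ := ∑ a ∈ A, z a • a
  have hvz : toR v = ∑ a ∈ A, (z a : ℝ) • toR a := toR_sum_nsmul A z id
  have hvp : ∀ i, v i ≤ 2 * p i := by
    intro i
    have hvi := congrFun hvz i
    have hpi := congrFun hxp i
    simp only [toR, Finset.sum_apply, Pi.smul_apply, smul_eq_mul] at hvi hpi
    have : (v i : ℝ) ≤ 2 * p i := by
      rw [hvi, ← hpi, mul_sum]
      exact sum_le_sum fun a ha => by nlinarith [hz2x a ha, (a i).cast_nonneg (α := ℝ)]
    exact_mod_cast this
  set u : Fin n →₀ ℕ := 2 • p - v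
  have hpuv : ∀ i, 2 * p i = u i + v i := fun i => by
    simp only [u, Finsupp.tsub_apply, Finsupp.smul_apply, smul_eq_mul]
    have := hvp i
    omega
  have hv : IsEvenPoint v := IsEvenPoint.sum_nsmul hA z
  have huz : ∑ a ∈ A, (2 * x a - z a) • toR a = toR u := by
    have huv : toR u + toR v = (2 : ℝ) • toR p := by
      funext i
      simp only [toR, Pi.add_apply, Pi.smul_apply, smul_eq_mul]
      exact_mod_cast (hpuv i).symm
    simp only [sub_smul, mul_smul, sum_sub_distrib, ← smul_sum, hxp, ← hvz]
    rw [← huv, add_sub_cancel_right]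
  refine ⟨u, v, fun huv => ?_, hv.of_two_mul_eq_add hpuv, hv, hpuv, huz, hvz.symm⟩
  -- `u = v` forces `p = v`, and then uniqueness of barycentric coordinates gives `z = x`
  have hpv : p = v := Finsupp.ext fun i => by have := hpuv i; rw [huv] at this; omega
  obtain ⟨a, ha, hne⟩ := hzx
  refine hne (hAff.eq_of_sum_eq_sum_coe (w₁ := fun a => (z a : ℝ)) ?_ ?_ a ha)
  · rw [hxk]
    exact_mod_cast hzk
  · rw [hxp, ← hvz, hpv]

end Lattice

/-- Let `A ⊆ (2ℕ)ⁿ` be a trellis (vertex set of a simplex) and `k ≥ n` a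
positive integer.  Then `kA = {k·a : a ∈ A}` is an `H`-trellis: the set of all lattice
points in `Conv(kA)` is itself a `kA`-mediated set (equivalently, the maximal `kA`-mediated
set `(kA)*` equals `Conv(kA) ∩ ℕⁿ`). -/
theorem dilated_trellis_H {n : ℕ}
    (A : Finset (Fin n →₀ ℕ)) (hA : ∀ a ∈ A, IsEvenPoint a)
    (hAff : AffineIndependent ℝ (fun a : A => toR (a : Fin n →₀ ℕ)))
    (k : ℕ) (hk : n ≤ k) (hk0 : 0 < k) :
    IsMediatedSet (A.image fun a => k • a)
      {p : Fin n →₀ ℕ |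
        toR p ∈ convexHull ℝ (toR '' ((fun a => k • a) '' (A : Set (Fin n →₀ ℕ))))} := by
  have hk0' : (0 : ℝ) < k := by exact_mod_cast hk0
  have hmem : ∀ q : Fin n →₀ ℕ,
      toR q ∈ convexHull ℝ (toR '' ((fun a => k • a) '' (A : Set (Fin n →₀ ℕ)))) ↔
        ∃ x : (Fin n →₀ ℕ) → ℝ,
          (∀ a ∈ A, 0 ≤ x a) ∧ ∑ a ∈ A, x a = k ∧ ∑ a ∈ A, x a • toR a = toR q := by
    intro q
    simp_rw [Set.image_image, toR_nsmul]
    exact mem_convexHull_smul_image_iff toR_injective.injOn hk0'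
  refine ⟨fun q hq => ?_, fun p hp => ?_⟩
  · obtain ⟨a, ha, rfl⟩ := mem_image.1 hq
    exact subset_convexHull ℝ _ ⟨k • a, ⟨a, ha, rfl⟩, rfl⟩
  by_cases hpA : p ∈ A.image fun a => k • a
  · exact Or.inl hpA
  obtain ⟨x, hx0, hxk, hxp⟩ := (hmem p).1 hp
  have hcard : #A ≤ k + 1 := by
    have := hAff.card_le_finrank_add_one
    rw [Fintype.card_coe, Module.finrank_fin_fun] at this
    omega
  have hsupp := exists_pair_ne_zero_of_forall_sum_smul_ne (hxk ▸ hk0'.ne') fun b hb h =>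
    hpA (mem_image.2 ⟨b, hb, toR_injective (by rw [toR_nsmul, ← hxk, ← h, hxp])⟩)
  obtain ⟨z, hz2x, hzk, hzx⟩ := exists_nat_le_two_mul_sum_eq_ne hx0 hxk hcard hsupp
  obtain ⟨u, v, huv, hu, hv, hpuv, hxzu, hzv⟩ :=
    exists_even_midpoint_decomposition hA hAff hxk hxp hz2x hzk hzx
  have hzk' : ∑ a ∈ A, (z a : ℝ) = k := by exact_mod_cast hzk
  refine Or.inr ⟨u, (hmem u).2 ⟨fun a => 2 * x a - z a, fun a ha => sub_nonneg.2 (hz2x a ha),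
    by rw [sum_sub_distrib, ← mul_sum, hxk, hzk']; ring, hxzu⟩,
    v, (hmem v).2 ⟨fun a => z a, fun _ _ => (z _).cast_nonneg, hzk', hzv⟩, huv, hu, hv, hpuv⟩

end
end SONC
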